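/- arXiv:1205.4610 — 2 statements merged into one kernel-verified Lean document; each statement's English description precedes it below -/
import Mathlib

section
/- Let λ : ℕ → ℝ be supported on squarefree integers coprime to A, and define y_r = μ(r) f_1(r) Σ'_d λ_{dr}/f(dr), where Σ' runs over squarefree d coprime to A (and coprime to r, so dr is squarefree). Then λ_d = μ(d) f(d) Σ'_r y_{rd}/f_1(rd) for all squarefree d coprime to A, where f(d)=∏_{p|d} p/k and f_1(d)=∏_{p|d}(p-k)/k. -/
/-!
Substituting the definition of `y` gives `Σ'_r y_{rd} / f₁(rd) = μ(d) Σ_r μ(r) Σ_e λ_{erd} / f(erd)`.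
Since `λ` vanishes off squarefree integers coprime to `A` below `R₂`, the side conditions of both
primed sums are automatic, so both may run over all of `[0, R₂)`. Grouping the double sum by
`m = er`, the coefficient of `λ_{md} / f(md)` is `Σ_{r ∣ m} μ(r)`, which vanishes unless `m = 1`;
what remains is `μ(d) λ_d / f(d)`.
-/

open Finset ArithmeticFunction
open scoped ArithmeticFunction.Moebius ArithmeticFunction.zeta

theorem sum_range_mul_eq_sum_filter_dvd {M : Type*} [AddCommMonoid M] {N r : ℕ} (hr : 0 < r)
    {H : ℕ → M} (hH : ∀ m, N ≤ m → H m = 0) :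
    ∑ e ∈ range N, H (e * r) = ∑ m ∈ range N with r ∣ m, H m := by
  rw [← sum_filter_of_ne (p := fun e => e * r < N)
    fun e _ he => not_le.mp fun h => he (hH _ h)]
  refine sum_nbij' (· * r) (· / r) ?_ ?_ ?_ ?_ fun _ _ => rfl
  · intro e he
    simp only [mem_filter, mem_range] at he ⊢
    exact ⟨he.2, dvd_mul_left r e⟩
  · intro m hm
    simp only [mem_filter, mem_range] at hm ⊢
    rw [Nat.div_mul_cancel hm.2]
    exact ⟨(Nat.div_le_self m r).trans_lt hm.1, hm.1⟩
  · intro e _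
    exact Nat.mul_div_cancel e hr
  · intro m hm
    exact Nat.div_mul_cancel (mem_filter.mp hm).2

theorem sum_moebius_mul_sum_mul_eq {R : Type*} [Ring R] {N : ℕ} {H : ℕ → R}
    (hH : ∀ m, H m ≠ 0 → 0 < m ∧ m < N) :
    ∑ r ∈ range N, (μ r : R) * ∑ e ∈ range N, H (e * r) = H 1 := by
  have hH' : ∀ m, N ≤ m → H m = 0 := fun m hm => by
    by_contra h
    exact absurd (hH m h).2 (not_lt.mpr hm)
  calc ∑ r ∈ range N, (μ r : R) * ∑ e ∈ range N, H (e * r)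
      = ∑ r ∈ range N, ∑ m ∈ range N, if r ∣ m then (μ r : R) * H m else 0 := by
        refine sum_congr rfl fun r _ => ?_
        rcases r.eq_zero_or_pos with rfl | hr
        · simp
        · rw [sum_range_mul_eq_sum_filter_dvd hr hH', mul_sum, sum_filter]
    _ = ∑ m ∈ range N, (∑ r ∈ m.divisors, (μ r : R)) * H m := by
        rw [sum_comm]
        refine sum_congr rfl fun m _ => ?_
        rcases eq_or_ne (H m) 0 with h | h
        · simp [h]
        obtain ⟨hm0, hmN⟩ := hH m h
        have hdiv : {r ∈ range N | r ∣ m} = m.divisors := by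
          ext r
          simp only [mem_filter, mem_range, Nat.mem_divisors]
          exact ⟨fun h => ⟨h.2, hm0.ne'⟩, fun h => ⟨(Nat.le_of_dvd hm0 h.1).trans_lt hmN, h.1⟩⟩
        rw [sum_mul, ← hdiv, sum_filter]
    _ = H 1 := by
        simp_rw [← intCoe_apply, ← coe_mul_zeta_apply, coe_moebius_mul_coe_zeta, one_apply,
          ite_mul, one_mul, zero_mul, sum_ite_eq', mem_range]
        exact if h : 1 < N then if_pos h else (if_neg h).trans (hH' 1 (not_lt.mp h)).symm

theorem sum_filter_squarefree_coprime_eq_sum {M : Type*} [AddCommMonoid M] {A d : ℕ}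
    (s : Finset ℕ) {F : ℕ → M}
    (hF : ∀ r, F r ≠ 0 → ∃ n, r * d ∣ n ∧ Squarefree n ∧ n.Coprime A) :
    ∑ r ∈ s with Squarefree r ∧ r.Coprime A ∧ r.Coprime d, F r = ∑ r ∈ s, F r := by
  refine sum_filter_of_ne fun r _ hr => ?_
  obtain ⟨n, hdvd, hn, hnA⟩ := hF r hr
  have hrd := hn.squarefree_of_dvd hdvd
  exact ⟨(Nat.squarefree_mul_iff.mp hrd).2.1,
    hnA.coprime_dvd_left ((dvd_mul_right r d).trans hdvd), Nat.coprime_of_squarefree_mul hrd⟩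

theorem prod_primeFactors_div_ne_zero {k : ℕ} (hk : 0 < k) (n : ℕ) :
    ∏ p ∈ n.primeFactors, ((p : ℝ) / k) ≠ 0 :=
  prod_ne_zero_iff.mpr fun p hp =>
    div_ne_zero (Nat.cast_ne_zero.mpr (Nat.prime_of_mem_primeFactors hp).ne_zero) (by positivity)

theorem prod_primeFactors_sub_div_ne_zero {k A n : ℕ} (hk : 0 < k)
    (hkp : ∀ p : ℕ, p.Prime → ¬ p ∣ A → k < p) (hn : n.Coprime A) :
    ∏ p ∈ n.primeFactors, (((p : ℝ) - k) / k) ≠ 0 := by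
  refine prod_ne_zero_iff.mpr fun p hp => div_ne_zero (sub_ne_zero.mpr ?_) (by positivity)
  have hp' := Nat.prime_of_mem_primeFactors hp
  have hpA := (Nat.Prime.coprime_iff_not_dvd hp').mp
    (hn.coprime_dvd_left (Nat.dvd_of_mem_primeFactors hp))
  exact_mod_cast (hkp p hp' hpA).ne'

/-- Möbius-inversion duality between the Selberg sieve weights `λ_d` and the
diagonalizing variables `y_r`. Here `λ` is supported on squarefree integers below `R₂`
coprime to `A`, `k ≥ 1` satisfies `k < p` for every prime `p ∤ A`,
`f(d) = ∏_{p ∣ d} p/k`, `f₁(d) = ∏_{p ∣ d} (p-k)/k`, and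
`y_r = μ(r) f₁(r) Σ'_d λ_{dr} / f(dr)` (the primed sum over squarefree `d` coprime to `A`
and to `r`). Then `λ_d = μ(d) f(d) Σ'_r y_{rd} / f₁(rd)` for all squarefree `d` coprime
to `A`. -/
theorem lambda_eq_moebius_inversion (k A R₂ : ℕ) (hk : 1 ≤ k)
    (hkp : ∀ p : ℕ, p.Prime → ¬ p ∣ A → k < p)
    (lam : ℕ → ℝ)
    (hsupp : ∀ d : ℕ, lam d ≠ 0 → Squarefree d ∧ Nat.Coprime d A ∧ d < R₂)
    (f f₁ : ℕ → ℝ)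
    (hf : ∀ d : ℕ, f d = ∏ p ∈ d.primeFactors, ((p : ℝ) / k))
    (hf₁ : ∀ d : ℕ, f₁ d = ∏ p ∈ d.primeFactors, (((p : ℝ) - k) / k))
    (y : ℕ → ℝ)
    (hy : ∀ r : ℕ, y r =
      ((ArithmeticFunction.moebius r : ℤ) : ℝ) * f₁ r *
        ∑ d ∈ (Finset.range R₂).filter
            (fun d => Squarefree d ∧ Nat.Coprime d A ∧ Nat.Coprime d r),
          lam (d * r) / f (d * r)) :
    ∀ d : ℕ, Squarefree d → Nat.Coprime d A →
      lam d = ((ArithmeticFunction.moebius d : ℤ) : ℝ) * f d *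
        ∑ r ∈ (Finset.range R₂).filter
            (fun r => Squarefree r ∧ Nat.Coprime r A ∧ Nat.Coprime r d),
          y (r * d) / f₁ (r * d) := by
  intro d hd hdA
  have hG : ∀ n, lam n / f n ≠ 0 → Squarefree n ∧ n.Coprime A ∧ n < R₂ :=
    fun n hn => hsupp n (left_ne_zero_of_mul hn)
  have hterm : ∀ r ∈ {r ∈ range R₂ | Squarefree r ∧ r.Coprime A ∧ r.Coprime d},
      y (r * d) / f₁ (r * d)
        = μ d * (μ r * ∑ e ∈ range R₂, lam (e * r * d) / f (e * r * d)) := by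
    intro r hr
    obtain ⟨-, -, hrA, hrd⟩ := mem_filter.mp hr
    have hf₁ne : f₁ (r * d) ≠ 0 :=
      hf₁ _ ▸ prod_primeFactors_sub_div_ne_zero hk hkp (hrA.mul_left hdA)
    rw [hy, sum_filter_squarefree_coprime_eq_sum _ fun e he => ⟨_, dvd_rfl, (hG _ he).1,
      (hG _ he).2.1⟩, isMultiplicative_moebius.map_mul_of_coprime hrd]
    simp_rw [mul_assoc]
    push_cast
    field_simp
  have hdual := sum_moebius_mul_sum_mul_eq (H := fun m => lam (m * d) / f (m * d)) fun m hm => by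
    obtain ⟨hsq, -, hlt⟩ := hG _ hm
    exact ⟨Nat.pos_of_ne_zero (left_ne_zero_of_mul hsq.ne_zero),
      (Nat.le_mul_of_pos_right m (Nat.pos_of_ne_zero hd.ne_zero)).trans_lt hlt⟩
  rw [sum_congr rfl hterm, ← mul_sum, sum_filter_squarefree_coprime_eq_sum _ fun r hr => ?_,
    hdual, one_mul]
  · have hμ : ((μ d : ℤ) : ℝ) ^ 2 = 1 := by exact_mod_cast moebius_sq_eq_one_of_squarefree hd
    have hfd : f d ≠ 0 := hf d ▸ prod_primeFactors_div_ne_zero hk d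
    field_simp
    linear_combination -lam d * hμ
  · obtain ⟨e, -, he⟩ := exists_ne_zero_of_sum_ne_zero (right_ne_zero_of_mul hr)
    exact ⟨_, ⟨e, by ring⟩, (hG _ he).1, (hG _ he).2.1⟩
end

section
/- Let k ≥ 2, let P be a real polynomial, and set P̃(x) = ∫₀^x P(t) dt, extended by P̃⁺(x) = P̃(x) for x ≥ 0 and 0 otherwise. For x₁,…,x_{r-1} ≥ 0 define I₁(x₁,…,x_{r-1}) = ∫₀¹ (Σ_{J ⊆ {1,…,r-1}} (-1)^{|J|} P̃⁺(1 - t - Σ_{i∈J} x_i))² t^{k-2} dt. Then for each fixed index j, I₁(x₁,…,x_{r-1}) ≪_{P,r} x_j² uniformly for x₁,…,x_{r-1} in a bounded region. -/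
open scoped Classical

/-- The extended antiderivative `P̃⁺`. -/
noncomputable def Ftil (P : Polynomial ℝ) (y : ℝ) : ℝ :=
  if 0 ≤ y then ∫ s in (0:ℝ)..y, P.eval s else 0

lemma Ftil_eq_max (P : Polynomial ℝ) (y : ℝ) :
    Ftil P y = ∫ s in (0:ℝ)..(max y 0), P.eval s := by
  unfold Ftil
  by_cases h : 0 ≤ y
  · rw [if_pos h, max_eq_left h]
  · rw [if_neg h, max_eq_right (le_of_not_ge h), intervalIntegral.integral_same]

lemma Ftil_continuous (P : Polynomial ℝ) : Continuous (Ftil P) := by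
  have h := intervalIntegral.continuous_primitive (μ := MeasureTheory.volume)
    (fun a b => (P.continuous).intervalIntegrable a b) 0
  have : Continuous fun y : ℝ => ∫ s in (0:ℝ)..(max y 0), P.eval s :=
    h.comp (continuous_id.max continuous_const)
  simpa only [← Ftil_eq_max] using this

lemma Ftil_lip (P : Polynomial ℝ) (L : ℝ) (hL : ∀ s ∈ Set.Icc (0:ℝ) 1, |P.eval s| ≤ L)
    (hL0 : 0 ≤ L) (y h : ℝ) (hy : y ≤ 1) (hh : 0 ≤ h) :
    |Ftil P y - Ftil P (y - h)| ≤ L * h := by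
  unfold Ftil
  by_cases h2 : 0 ≤ y - h
  · have h1 : 0 ≤ y := by linarith
    rw [if_pos h1, if_pos h2,
      intervalIntegral.integral_interval_sub_left
        ((P.continuous).intervalIntegrable 0 y) ((P.continuous).intervalIntegrable 0 (y - h))]
    have hb : ∀ s ∈ Set.uIoc (y - h) y, ‖P.eval s‖ ≤ L := by
      intro s hs
      rw [Set.uIoc_of_le (by linarith)] at hs
      exact hL s ⟨by linarith [hs.1], by linarith [hs.2]⟩
    calc ‖∫ s in (y - h)..y, P.eval s‖ ≤ L * |y - (y - h)| :=
          intervalIntegral.norm_integral_le_of_norm_le_const hb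
      _ = L * h := by rw [show y - (y - h) = h by ring, abs_of_nonneg hh]
  · by_cases h1 : 0 ≤ y
    · rw [if_pos h1, if_neg h2, sub_zero]
      have hb : ∀ s ∈ Set.uIoc (0:ℝ) y, ‖P.eval s‖ ≤ L := by
        intro s hs
        rw [Set.uIoc_of_le h1] at hs
        exact hL s ⟨le_of_lt hs.1, le_trans hs.2 hy⟩
      calc ‖∫ s in (0:ℝ)..y, P.eval s‖ ≤ L * |y - 0| :=
            intervalIntegral.norm_integral_le_of_norm_le_const hb
        _ = L * y := by rw [sub_zero, abs_of_nonneg h1]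
        _ ≤ L * h := by
            apply mul_le_mul_of_nonneg_left _ hL0
            linarith [lt_of_not_ge h2]
    · rw [if_neg h1, if_neg h2, sub_zero, abs_zero]
      positivity

/-- With `P̃(x) = ∫₀ˣ P(t) dt` extended by zero to negative arguments, and
`I₁(x₁,…,x_{r-1}) = ∫₀¹ (∑_{J ⊆ {1,…,r-1}} (-1)^{|J|} P̃⁺(1 - t - ∑_{i∈J} xᵢ))² t^{k-2} dt`
for `k ≥ 2`, for each fixed index `j` we have `I₁(x₁,…,x_{r-1}) ≪_{P,r} x_j²`
uniformly for `x₁,…,x_{r-1}` nonnegative in a bounded region. -/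
theorem I1_bound (k r : ℕ) (hk : 2 ≤ k) (P : Polynomial ℝ) (B : ℝ) (hB : 0 < B)
    (j : Fin (r - 1)) :
    ∃ C : ℝ, ∀ x : Fin (r - 1) → ℝ, (∀ i, 0 ≤ x i ∧ x i ≤ B) →
      (∫ t in (0:ℝ)..1,
        (∑ J ∈ (Finset.univ : Finset (Fin (r - 1))).powerset,
          (-1 : ℝ) ^ J.card *
            (if 0 ≤ 1 - t - ∑ i ∈ J, x i then
              ∫ s in (0:ℝ)..(1 - t - ∑ i ∈ J, x i), P.eval s
            else 0)) ^ 2 * t ^ (k - 2))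
        ≤ C * (x j) ^ 2 := by
  classical
  obtain ⟨L₀, hL₀⟩ := (isCompact_Icc :
    IsCompact (Set.Icc (0:ℝ) 1)).exists_bound_of_continuousOn P.continuous.continuousOn
  set L : ℝ := max L₀ 0 with hLdef
  have hL : ∀ s ∈ Set.Icc (0:ℝ) 1, |P.eval s| ≤ L :=
    fun s hs => le_trans (hL₀ s hs) (le_max_left _ _)
  have hL0 : 0 ≤ L := le_max_right _ _
  set N : ℝ := (((Finset.univ.erase j : Finset (Fin (r-1))).powerset).card : ℝ) with hNdef
  have hN0 : 0 ≤ N := Nat.cast_nonneg _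
  refine ⟨(N * L) ^ 2, ?_⟩
  intro x hx
  have hFrw : ∀ y : ℝ,
      (if 0 ≤ y then ∫ s in (0:ℝ)..y, P.eval s else 0) = Ftil P y := fun y => rfl
  simp only [hFrw]
  have hxj : 0 ≤ x j := (hx j).1
  -- pointwise bound of the sum
  have hsum : ∀ t ∈ Set.Icc (0:ℝ) 1,
      |∑ J ∈ (Finset.univ : Finset (Fin (r - 1))).powerset,
        (-1 : ℝ) ^ J.card * Ftil P (1 - t - ∑ i ∈ J, x i)| ≤ N * L * x j := by
    intro t ht
    have huniv : (Finset.univ : Finset (Fin (r - 1))) = insert j (Finset.univ.erase j) :=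
      (Finset.insert_erase (Finset.mem_univ j)).symm
    rw [huniv, Finset.sum_powerset_insert (Finset.notMem_erase j _), ← Finset.sum_add_distrib]
    refine le_trans (Finset.abs_sum_le_sum_abs _ _) ?_
    have hterm : ∀ J ∈ (Finset.univ.erase j : Finset (Fin (r-1))).powerset,
        |(-1 : ℝ) ^ J.card * Ftil P (1 - t - ∑ i ∈ J, x i)
          + (-1 : ℝ) ^ (insert j J).card * Ftil P (1 - t - ∑ i ∈ insert j J, x i)| ≤ L * x j := by
      intro J hJ
      have hjJ : j ∉ J := fun hmem =>
        Finset.notMem_erase j _ ((Finset.mem_powerset.1 hJ) hmem)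
      rw [Finset.card_insert_of_notMem hjJ, Finset.sum_insert hjJ]
      have harg : 1 - t - (x j + ∑ i ∈ J, x i) = (1 - t - ∑ i ∈ J, x i) - x j := by ring
      rw [harg, pow_succ]
      have : (-1 : ℝ) ^ J.card * Ftil P (1 - t - ∑ i ∈ J, x i)
          + (-1 : ℝ) ^ J.card * (-1) * Ftil P ((1 - t - ∑ i ∈ J, x i) - x j)
          = (-1 : ℝ) ^ J.card *
            (Ftil P (1 - t - ∑ i ∈ J, x i) - Ftil P ((1 - t - ∑ i ∈ J, x i) - x j)) := by ring
      rw [this, abs_mul, abs_pow, abs_neg, abs_one, one_pow, one_mul]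
      have hsx : (0:ℝ) ≤ ∑ i ∈ J, x i := Finset.sum_nonneg fun i _ => (hx i).1
      exact Ftil_lip P L hL hL0 _ _ (by linarith [ht.1]) hxj
    calc ∑ J ∈ (Finset.univ.erase j : Finset (Fin (r-1))).powerset,
          |(-1 : ℝ) ^ J.card * Ftil P (1 - t - ∑ i ∈ J, x i)
            + (-1 : ℝ) ^ (insert j J).card * Ftil P (1 - t - ∑ i ∈ insert j J, x i)|
        ≤ ∑ _J ∈ (Finset.univ.erase j : Finset (Fin (r-1))).powerset, L * x j :=
          Finset.sum_le_sum hterm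
      _ = N * L * x j := by rw [Finset.sum_const, nsmul_eq_mul]; ring
  -- continuity of the integrand
  have hcont : Continuous fun t : ℝ =>
      (∑ J ∈ (Finset.univ : Finset (Fin (r - 1))).powerset,
        (-1 : ℝ) ^ J.card * Ftil P (1 - t - ∑ i ∈ J, x i)) ^ 2 * t ^ (k - 2) := by
    apply Continuous.mul _ (continuous_pow (k - 2))
    apply Continuous.pow
    apply continuous_finset_sum
    intro J _
    exact continuous_const.mul ((Ftil_continuous P).comp (by continuity))
  -- pointwise bound of the integrand
  have hpt : ∀ t ∈ Set.Icc (0:ℝ) 1,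
      (∑ J ∈ (Finset.univ : Finset (Fin (r - 1))).powerset,
        (-1 : ℝ) ^ J.card * Ftil P (1 - t - ∑ i ∈ J, x i)) ^ 2 * t ^ (k - 2)
      ≤ (N * L * x j) ^ 2 * t ^ (k - 2) := by
    intro t ht
    apply mul_le_mul_of_nonneg_right _ (pow_nonneg ht.1 _)
    have h1 := hsum t ht
    calc (∑ J ∈ (Finset.univ : Finset (Fin (r - 1))).powerset,
            (-1 : ℝ) ^ J.card * Ftil P (1 - t - ∑ i ∈ J, x i)) ^ 2
        = |∑ J ∈ (Finset.univ : Finset (Fin (r - 1))).powerset,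
            (-1 : ℝ) ^ J.card * Ftil P (1 - t - ∑ i ∈ J, x i)| ^ 2 := (sq_abs _).symm
      _ ≤ (N * L * x j) ^ 2 := pow_le_pow_left₀ (abs_nonneg _) h1 2
  have hint1 : IntervalIntegrable (fun t : ℝ =>
      (∑ J ∈ (Finset.univ : Finset (Fin (r - 1))).powerset,
        (-1 : ℝ) ^ J.card * Ftil P (1 - t - ∑ i ∈ J, x i)) ^ 2 * t ^ (k - 2))
      MeasureTheory.volume 0 1 := hcont.intervalIntegrable 0 1
  have hint2 : IntervalIntegrable (fun t : ℝ => (N * L * x j) ^ 2 * t ^ (k - 2))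
      MeasureTheory.volume 0 1 := (continuous_const.mul (continuous_pow _)).intervalIntegrable 0 1
  calc (∫ t in (0:ℝ)..1,
        (∑ J ∈ (Finset.univ : Finset (Fin (r - 1))).powerset,
          (-1 : ℝ) ^ J.card * Ftil P (1 - t - ∑ i ∈ J, x i)) ^ 2 * t ^ (k - 2))
      ≤ ∫ t in (0:ℝ)..1, (N * L * x j) ^ 2 * t ^ (k - 2) :=
        intervalIntegral.integral_mono_on zero_le_one hint1 hint2 (fun t ht => hpt t ht)
    _ = (N * L * x j) ^ 2 * (((1:ℝ) ^ (k - 2 + 1) - 0 ^ (k - 2 + 1)) / (((k - 2 : ℕ) : ℝ) + 1)) := by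
        rw [intervalIntegral.integral_const_mul, integral_pow]
    _ ≤ (N * L * x j) ^ 2 * 1 := by
        apply mul_le_mul_of_nonneg_left _ (sq_nonneg _)
        rw [one_pow, zero_pow (Nat.succ_ne_zero _), sub_zero]
        rw [div_le_one (by positivity)]
        exact le_add_of_nonneg_left (by positivity)
    _ = (N * L) ^ 2 * x j ^ 2 := by ring
end
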